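/- Let (T,d,ρ,u) be a plane ℝ-tree. Then → raises ≺: for all α, β, γ ∈ T×[0,1] with β ↷ γ, one has (γ → α implies β ↷ α) and (β → α implies α ↷ γ). -/
import Mathlib


open Set MeasureTheory Filter Metric

/-- The metric segment `[[x,y]]` between `x` and `y`. -/
def geoSeg {T : Type*} [MetricSpace T] (x y : T) : Set T :=
  {z | dist x z + dist z y = dist x y}

/-- `(T,d)` is an `ℝ`-tree: it is geodesic (any two points are joined by a geodesic
segment, which is `geoSeg x y`) and loopless (this segment is the unique arc joining
`x` and `y`). -/
structure IsRTree (T : Type*) [MetricSpace T] : Prop where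
  geodesic : ∀ x y : T, ∃ γ : ℝ → T, γ 0 = x ∧ γ (dist x y) = y ∧
    (∀ s ∈ Icc (0:ℝ) (dist x y), ∀ t ∈ Icc (0:ℝ) (dist x y),
      dist (γ s) (γ t) = |s - t|) ∧
    γ '' Icc (0:ℝ) (dist x y) = geoSeg x y
  loopless : ∀ x y : T, ∀ f : ℝ → T, ContinuousOn f (Icc (0:ℝ) 1) →
    InjOn f (Icc (0:ℝ) 1) → f 0 = x → f 1 = y → f '' Icc (0:ℝ) 1 = geoSeg x y

/-- The set of connected components of `T \ {x}`. -/
def comps {T : Type*} [MetricSpace T] (x : T) : Set (Set T) :=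
  {C | ∃ y, y ≠ x ∧ C = connectedComponentIn ({x}ᶜ) y}

/-- A plane `ℝ`-tree structure on the metric space `T`: `T` is a separable complete
`ℝ`-tree with a root and a balanced angle function `u`.  `cca x y` is the closest
common ancestor of `x` and `y`. -/
structure PlaneRTree (T : Type*) [MetricSpace T] where
  sep : TopologicalSpace.SeparableSpace T
  cpl : CompleteSpace T
  tree : IsRTree T
  root : T
  cca : T → T → T
  cca_mem : ∀ x y : T, cca x y ∈ geoSeg root x ∩ geoSeg root y
  cca_max : ∀ x y : T, ∀ z ∈ geoSeg root x ∩ geoSeg root y,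
    dist root z ≤ dist root (cca x y)
  u : T → T → ℝ
  u_mem : ∀ x y : T, u x y ∈ Icc (0:ℝ) 1
  u_root : ∀ x : T, u x root = 0
  u_self : ∀ x : T, u x x = 0
  u_eq_iff : ∀ x y z : T, y ≠ x → z ≠ x →
    (u x y = u x z ↔ connectedComponentIn ({x}ᶜ) y = connectedComponentIn ({x}ᶜ) z)
  balanced : ∀ x y : T, (comps x).ncard = 2 → u x y = 0 ∨ u x y = 1/2

namespace PlaneRTree

variable {T : Type*} [MetricSpace T]

open Classical in
/-- The angle `u(x, (y,w))`: it is `u x y` if `x ≠ y`, and `w` if `x = y`. -/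
noncomputable def ang (P : PlaneRTree T) (x : T) (β : T × ℝ) : ℝ :=
  if x = β.1 then β.2 else P.u x β.1

/-- `α ↷ β` : `α` is at the left of `β`. -/
def leftOf (P : PlaneRTree T) (α β : T × ℝ) : Prop :=
  P.ang (P.cca α.1 β.1) α < P.ang (P.cca α.1 β.1) β

/-- `α → β` : `β` is in front of `α`. -/
def frontOf (P : PlaneRTree T) (α β : T × ℝ) : Prop :=
  α.1 ∈ geoSeg P.root β.1 ∧ P.ang α.1 β = α.2

/-- The contour relation `≺` : `α ≺ β` iff `α ↷ β` or `α → β`. -/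
def precOf (P : PlaneRTree T) (α β : T × ℝ) : Prop :=
  P.leftOf α β ∨ P.frontOf α β

end PlaneRTree

section Aux

variable {T : Type*} [MetricSpace T]

lemma mem_geoSeg_left' (x y : T) : x ∈ geoSeg x y := by simp [geoSeg]

lemma mem_geoSeg_right' (x y : T) : y ∈ geoSeg x y := by simp [geoSeg]

lemma geoSeg_def' {x y z : T} (h : z ∈ geoSeg x y) :
    dist x z + dist z y = dist x y := h

lemma dist_le_of_mem_geoSeg {ρ a z : T} (h : z ∈ geoSeg ρ a) : dist ρ z ≤ dist ρ a := by
  have := geoSeg_def' h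
  have := dist_nonneg (x := z) (y := a)
  linarith

lemma geoSeg_trans' {ρ y b z : T} (hy : y ∈ geoSeg ρ b) (hz : z ∈ geoSeg ρ y) :
    z ∈ geoSeg ρ b := by
  have h1 := geoSeg_def' hy
  have h2 := geoSeg_def' hz
  have h3 := dist_triangle ρ z b
  have h4 := dist_triangle z y b
  show dist ρ z + dist z b = dist ρ b
  linarith

lemma IsRTree.dist_of_mem_geoSeg (ht : IsRTree T) {ρ a z z' : T}
    (hz : z ∈ geoSeg ρ a) (hz' : z' ∈ geoSeg ρ a) :
    dist z z' = |dist ρ z - dist ρ z'| := by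
  obtain ⟨g, h0, hd, hiso, himg⟩ := ht.geodesic ρ a
  rw [← himg] at hz hz'
  obtain ⟨s, hs, rfl⟩ := hz
  obtain ⟨t, htm, rfl⟩ := hz'
  have h0' : (0:ℝ) ∈ Icc (0:ℝ) (dist ρ a) := ⟨le_refl _, dist_nonneg⟩
  have hds : dist ρ (g s) = s := by
    have := hiso 0 h0' s hs
    rw [h0] at this
    rw [this, abs_of_nonpos (by linarith [hs.1])]
    ring
  have hdt : dist ρ (g t) = t := by
    have := hiso 0 h0' t htm
    rw [h0] at this
    rw [this, abs_of_nonpos (by linarith [htm.1])]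
    ring
  rw [hds, hdt]
  exact hiso s hs t htm

lemma IsRTree.eq_of_dist_eq (ht : IsRTree T) {ρ a z z' : T}
    (hz : z ∈ geoSeg ρ a) (hz' : z' ∈ geoSeg ρ a)
    (hd : dist ρ z = dist ρ z') : z = z' := by
  have := ht.dist_of_mem_geoSeg hz hz'
  rw [hd, sub_self, abs_zero] at this
  exact dist_eq_zero.mp this

lemma IsRTree.mem_geoSeg_of_le (ht : IsRTree T) {ρ a z z' : T}
    (hz : z ∈ geoSeg ρ a) (hz' : z' ∈ geoSeg ρ a)
    (hd : dist ρ z ≤ dist ρ z') : z ∈ geoSeg ρ z' := by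
  have h := ht.dist_of_mem_geoSeg hz hz'
  rw [abs_of_nonpos (by linarith)] at h
  show dist ρ z + dist z z' = dist ρ z'
  rw [h]; ring

lemma IsRTree.isPreconnected_geoSeg (ht : IsRTree T) (x y : T) :
    IsPreconnected (geoSeg x y) := by
  obtain ⟨g, h0, hd, hiso, himg⟩ := ht.geodesic x y
  rw [← himg]
  apply IsPreconnected.image isPreconnected_Icc
  rw [Metric.continuousOn_iff]
  intro b hb ε hε
  exact ⟨ε, hε, fun a ha hlt => by
    rw [hiso a ha b hb, ← Real.dist_eq]; exact hlt⟩

lemma IsRTree.componentIn_eq (ht : IsRTree T) {x p q : T}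
    (hx : x ∉ geoSeg p q) :
    connectedComponentIn ({x}ᶜ : Set T) p = connectedComponentIn ({x}ᶜ : Set T) q := by
  have hsub : geoSeg p q ⊆ ({x}ᶜ : Set T) := by
    intro z hz
    simp only [Set.mem_compl_iff, Set.mem_singleton_iff]
    rintro rfl
    exact hx hz
  have hc := ht.isPreconnected_geoSeg p q
  have hsubc := hc.subset_connectedComponentIn (mem_geoSeg_left' p q) hsub
  exact connectedComponentIn_eq (hsubc (mem_geoSeg_right' p q))

lemma notMem_geoSeg_mid {ρ x c a : T} (hx : x ∈ geoSeg ρ c) (hc : c ∈ geoSeg ρ a)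
    (hne : x ≠ c) : x ∉ geoSeg c a := by
  intro hmem
  have h1 := geoSeg_def' hx
  have h2 := geoSeg_def' hc
  have h3 := geoSeg_def' hmem
  have h4 := dist_triangle ρ x a
  have h5 := dist_comm x c
  apply hne
  rw [← dist_eq_zero]
  have h6 := dist_nonneg (x := x) (y := c)
  linarith

namespace PlaneRTree

lemma cca_comm (P : PlaneRTree T) (x y : T) : P.cca x y = P.cca y x := by
  have h1 := P.cca_mem x y
  have h2 := P.cca_mem y x
  have h3 : dist P.root (P.cca x y) ≤ dist P.root (P.cca y x) :=
    P.cca_max y x _ ⟨h1.2, h1.1⟩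
  have h4 : dist P.root (P.cca y x) ≤ dist P.root (P.cca x y) :=
    P.cca_max x y _ ⟨h2.2, h2.1⟩
  exact P.tree.eq_of_dist_eq h1.1 h2.2 (le_antisymm h3 h4)

lemma key (P : PlaneRTree T) (a b c : T) (v w v' : ℝ)
    (hc : c ∈ geoSeg P.root a)
    (hca : P.ang c (a, v) = w)
    (h : P.ang (P.cca b c) (b, v') ≠ P.ang (P.cca b c) (c, w)) :
    P.cca b a = P.cca b c ∧ P.ang (P.cca b c) (a, v) = P.ang (P.cca b c) (c, w) := by
  set ρ := P.root with hρ
  have hxmem := P.cca_mem b c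
  have hymem := P.cca_mem b a
  set x := P.cca b c with hxdef
  set y := P.cca b a with hydef
  have hxa : x ∈ geoSeg ρ a := geoSeg_trans' hc hxmem.2
  rcases le_or_gt (dist ρ y) (dist ρ c) with hle | hlt
  · -- main case : y = x
    have hyc : y ∈ geoSeg ρ c := P.tree.mem_geoSeg_of_le hymem.2 hc hle
    have h1 : dist ρ y ≤ dist ρ x := P.cca_max b c y ⟨hymem.1, hyc⟩
    have h2 : dist ρ x ≤ dist ρ y := P.cca_max b a x ⟨hxmem.1, hxa⟩
    have hyx : y = x := P.tree.eq_of_dist_eq hymem.1 hxmem.1 (le_antisymm h1 h2)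
    refine ⟨hyx, ?_⟩
    by_cases hxc : x = c
    · rw [hxc]
      rw [show P.ang c (c, w) = w by simp [ang]]
      exact hca
    · have hxa' : x ≠ a := by
        intro he
        apply hxc
        have ha1 : dist ρ x ≤ dist ρ c := dist_le_of_mem_geoSeg hxmem.2
        have ha2 : dist ρ c ≤ dist ρ x := he ▸ dist_le_of_mem_geoSeg hc
        exact P.tree.eq_of_dist_eq hxmem.2 (mem_geoSeg_right' ρ c) (le_antisymm ha1 ha2)
      have hu : P.u x a = P.u x c := by
        by_cases hac : a = c
        · rw [hac]
        · have hnm : x ∉ geoSeg c a := notMem_geoSeg_mid hxmem.2 hc hxc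
          have hcomp := P.tree.componentIn_eq hnm
          exact (P.u_eq_iff x a c (Ne.symm hxa') (Ne.symm hxc)).mpr hcomp.symm
      simp only [ang, if_neg hxa', if_neg hxc]
      exact hu
  · -- degenerate case : x = c, contradiction with h
    exfalso
    have hcy : c ∈ geoSeg ρ y := P.tree.mem_geoSeg_of_le hc hymem.2 hlt.le
    have hcb : c ∈ geoSeg ρ b := geoSeg_trans' hymem.1 hcy
    have h1 : dist ρ c ≤ dist ρ x := P.cca_max b c c ⟨hcb, mem_geoSeg_right' ρ c⟩
    have h2 : dist ρ x ≤ dist ρ c := dist_le_of_mem_geoSeg hxmem.2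
    have hxc : x = c :=
      P.tree.eq_of_dist_eq hxmem.2 (mem_geoSeg_right' ρ c) (le_antisymm h2 h1)
    have hbc : b ≠ c := by
      rintro rfl
      exact absurd (dist_le_of_mem_geoSeg hymem.1) (not_le.mpr hlt)
    have hac : a ≠ c := by
      rintro rfl
      exact absurd (dist_le_of_mem_geoSeg hymem.2) (not_le.mpr hlt)
    have hyc : y ≠ c := by
      rintro rfl
      exact lt_irrefl _ hlt
    have hnb : c ∉ geoSeg y b := notMem_geoSeg_mid hcy hymem.1 hyc.symm
    have hna : c ∉ geoSeg y a := notMem_geoSeg_mid hcy hymem.2 hyc.symm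
    have e1 := P.tree.componentIn_eq hnb
    have e2 := P.tree.componentIn_eq hna
    have hu : P.u c b = P.u c a :=
      (P.u_eq_iff c b a hbc hac).mpr (e1.symm.trans e2)
    have hua : P.u c a = w := by
      have : P.ang c (a, v) = P.u c a := by
        simp only [ang, if_neg (Ne.symm hac)]
      rw [← this, hca]
    apply h
    rw [hxc]
    simp only [ang, if_neg (Ne.symm hbc), if_pos rfl]
    rw [hu, hua]
    simp

end PlaneRTree

end Aux

/-- `→` raises `≺`: for all `α, β, γ ∈ T × [0,1]` with `β ↷ γ`, one has
`γ → α ⟹ β ↷ α` and `β → α ⟹ α ↷ γ`. -/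
theorem frontOf_raises_prec {T : Type*} [MetricSpace T] (P : PlaneRTree T)
    (α β γ : T × ℝ) (hα : α.2 ∈ Icc (0:ℝ) 1) (hβ : β.2 ∈ Icc (0:ℝ) 1)
    (hγ : γ.2 ∈ Icc (0:ℝ) 1) (h : P.leftOf β γ) :
    (P.frontOf γ α → P.leftOf β α) ∧ (P.frontOf β α → P.leftOf α γ) := by
  constructor
  · rintro ⟨hc, hang⟩
    have hne : P.ang (P.cca β.1 γ.1) (β.1, β.2) ≠ P.ang (P.cca β.1 γ.1) (γ.1, γ.2) :=
      ne_of_lt h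
    obtain ⟨hcca, hAng⟩ := P.key α.1 β.1 γ.1 α.2 γ.2 β.2 hc hang hne
    show P.ang (P.cca β.1 α.1) β < P.ang (P.cca β.1 α.1) α
    rw [hcca]
    exact lt_of_lt_of_eq h hAng.symm
  · rintro ⟨hc, hang⟩
    have h' : P.ang (P.cca γ.1 β.1) (γ.1, γ.2) ≠ P.ang (P.cca γ.1 β.1) (β.1, β.2) := by
      rw [P.cca_comm γ.1 β.1]
      exact ne_of_gt h
    obtain ⟨hcca, hAng⟩ := P.key α.1 γ.1 β.1 α.2 β.2 γ.2 hc hang h'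
    show P.ang (P.cca α.1 γ.1) α < P.ang (P.cca α.1 γ.1) γ
    rw [P.cca_comm α.1 γ.1, hcca]
    rw [P.cca_comm γ.1 β.1] at hAng ⊢
    exact lt_of_eq_of_lt hAng h
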